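/- Let ι be a finite type, equip real ι × ι matrices with the norm ‖A‖ = max_i Σ_j |A_{ij}| (the L∞ operator norm). Let Q be a real ι × ι matrix, (c_N) a sequence of positive reals with c_N → 0, and (P_N) a sequence of real ι × ι matrices such that ‖P_N‖ ≤ 1 for all N, ‖I + c_N Q‖ ≤ 1 for all sufficiently large N, and ‖P_N − (I + c_N Q)‖ / c_N → 0 as N → ∞. Then for every t ≥ 0, P_N^{⌊t/c_N⌋} → exp(tQ) as N → ∞. -/

import Mathlib

/-!
Both `P_N` and `E_N = exp (c_N • Q)` are `1 + c_N • Q + o(c_N)`, so both have norm at most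
`exp (c_N R)` with `R = ‖Q‖ + 1`. Telescoping then gives
`‖P_N ^ k - E_N ^ k‖ ≤ k c_N · exp (k c_N R) · ‖P_N - E_N‖ / c_N → 0` for `k = ⌊t / c_N⌋`,
while `E_N ^ k = exp ((k c_N) • Q) → exp (t • Q)` because `k c_N → t`.
-/

open Filter Topology

section NormedRing

variable {𝔸 : Type*} [NormedRing 𝔸] [NormOneClass 𝔸]

theorem norm_pow_sub_pow_le {A B : 𝔸} {M : ℝ} (hA : ‖A‖ ≤ M) (hB : ‖B‖ ≤ M) (k : ℕ) :
    ‖A ^ k - B ^ k‖ ≤ k * M ^ (k - 1) * ‖A - B‖ := by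
  obtain _ | k := k
  · simp
  induction k with
  | zero => simp
  | succ k ih =>
    have hBk : ‖B ^ (k + 1)‖ ≤ M ^ (k + 1) :=
      (norm_pow_le B _).trans (pow_le_pow_left₀ (norm_nonneg B) hB _)
    have hM : 0 ≤ M := (norm_nonneg A).trans hA
    calc ‖A ^ (k + 2) - B ^ (k + 2)‖
        = ‖A * (A ^ (k + 1) - B ^ (k + 1)) + (A - B) * B ^ (k + 1)‖ := by
          rw [pow_succ' A, pow_succ' B]; noncomm_ring
      _ ≤ M * ((k + 1 : ℕ) * M ^ k * ‖A - B‖) + ‖A - B‖ * M ^ (k + 1) := by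
          refine (norm_add_le _ _).trans (add_le_add ?_ ?_)
          · exact (norm_mul_le _ _).trans (mul_le_mul hA ih (norm_nonneg _) hM)
          · exact (norm_mul_le _ _).trans (mul_le_mul_of_nonneg_left hBk (norm_nonneg _))
      _ = (k + 2 : ℕ) * M ^ (k + 1) * ‖A - B‖ := by push_cast; ring

theorem eventually_norm_le_exp_of_tendsto_inv_smul_sub_one [NormedSpace ℝ 𝔸] {α : Type*}
    {l : Filter α} {A : α → 𝔸} {c : α → ℝ} {Q : 𝔸} (hc_pos : ∀ᶠ N in l, 0 < c N)
    (hA : Tendsto (fun N => (c N)⁻¹ • (A N - 1)) l (𝓝 Q)) :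
    ∀ᶠ N in l, ‖A N‖ ≤ Real.exp (c N * (‖Q‖ + 1)) := by
  have hbound : ∀ᶠ N in l, ‖(c N)⁻¹ • (A N - 1)‖ < ‖Q‖ + 1 :=
    hA.norm.eventually (gt_mem_nhds (lt_add_one _))
  filter_upwards [hc_pos, hbound] with N hcN hN
  have hA1 : ‖A N - 1‖ ≤ c N * (‖Q‖ + 1) := by
    rw [norm_smul, Real.norm_eq_abs, abs_inv, abs_of_pos hcN] at hN
    rw [← inv_mul_le_iff₀ hcN]
    exact hN.le
  calc ‖A N‖ ≤ ‖(1 : 𝔸)‖ + ‖A N - 1‖ := norm_le_insert' _ _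
    _ ≤ c N * (‖Q‖ + 1) + 1 := by rw [norm_one]; linarith
    _ ≤ Real.exp (c N * (‖Q‖ + 1)) := Real.add_one_le_exp _

end NormedRing

theorem tendsto_nat_floor_div_mul_nhdsGT_zero {t : ℝ} (ht : 0 ≤ t) :
    Tendsto (fun x : ℝ => ⌊t / x⌋₊ * x) (𝓝[>] 0) (𝓝 t) := by
  refine ((tendsto_nat_floor_mul_div_atTop ht).comp tendsto_inv_nhdsGT_zero).congr fun x => ?_
  simp only [Function.comp_apply, div_eq_mul_inv, inv_inv]

section BanachAlgebra

variable {𝔸 : Type*} [NormedRing 𝔸] [NormedAlgebra ℝ 𝔸] [CompleteSpace 𝔸]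

open NormedSpace

theorem tendsto_inv_smul_exp_smul_sub_one (Q : 𝔸) :
    Tendsto (fun s : ℝ => s⁻¹ • (exp (s • Q) - 1)) (𝓝[≠] 0) (𝓝 Q) := by
  simpa using (hasDerivAt_exp_smul_const (𝕂 := ℝ) Q 0).tendsto_slope_zero

variable [NormOneClass 𝔸]

theorem tendsto_pow_exp_of_tendsto_inv_smul_sub_one {α : Type*} {l : Filter α} {A : α → 𝔸}
    {Q : 𝔸} {c : α → ℝ} {k : α → ℕ} {t : ℝ} (hc : Tendsto c l (𝓝[>] 0))
    (hkc : Tendsto (fun N => k N * c N) l (𝓝 t))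
    (hA : Tendsto (fun N => (c N)⁻¹ • (A N - 1)) l (𝓝 Q)) :
    Tendsto (fun N => A N ^ k N) l (𝓝 (exp (t • Q))) := by
  let +nondep : NormedAlgebra ℚ 𝔸 := .restrictScalars ℚ ℝ 𝔸
  set E : α → 𝔸 := fun N => exp (c N • Q)
  have hc_pos : ∀ᶠ N in l, 0 < c N := (tendsto_nhdsWithin_iff.1 hc).2
  have hE : Tendsto (fun N => (c N)⁻¹ • (E N - 1)) l (𝓝 Q) :=
    (tendsto_inv_smul_exp_smul_sub_one Q).comp (hc.mono_right (nhdsGT_le_nhdsNE 0))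
  have hE_pow : ∀ N, E N ^ k N = exp ((k N * c N) • Q) := fun N => by
    rw [← exp_nsmul, ← Nat.cast_smul_eq_nsmul ℝ, smul_smul]
  have hE_pow_lim : Tendsto (fun N => E N ^ k N) l (𝓝 (exp (t • Q))) := by
    simp_rw [hE_pow]
    exact (exp_continuous.tendsto _).comp (hkc.smul_const Q)
  have hAE : Tendsto (fun N => (c N)⁻¹ • (A N - E N)) l (𝓝 0) := by
    simpa [smul_sub] using hA.sub hE
  set R := ‖Q‖ + 1
  have hbound : ∀ᶠ N in l, ‖A N ^ k N - E N ^ k N‖ ≤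
      k N * c N * Real.exp (k N * c N * R) * ‖(c N)⁻¹ • (A N - E N)‖ := by
    filter_upwards [hc_pos, eventually_norm_le_exp_of_tendsto_inv_smul_sub_one hc_pos hA,
      eventually_norm_le_exp_of_tendsto_inv_smul_sub_one hc_pos hE] with N hcN hAN hEN
    have hM : 1 ≤ Real.exp (c N * R) := Real.one_le_exp (by positivity)
    calc ‖A N ^ k N - E N ^ k N‖
        ≤ k N * Real.exp (c N * R) ^ (k N - 1) * ‖A N - E N‖ := norm_pow_sub_pow_le hAN hEN _
      _ ≤ k N * Real.exp (c N * R) ^ k N * ‖A N - E N‖ := by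
          gcongr
          exact Nat.sub_le _ _
      _ = k N * c N * Real.exp (k N * c N * R) * ‖(c N)⁻¹ • (A N - E N)‖ := by
          rw [norm_smul, Real.norm_eq_abs, abs_inv, abs_of_pos hcN, ← Real.exp_nat_mul]
          field_simp
  have hbound_lim : Tendsto (fun N => k N * c N * Real.exp (k N * c N * R) *
      ‖(c N)⁻¹ • (A N - E N)‖) l (𝓝 0) := by
    simpa using (hkc.mul (hkc.mul_const R).rexp).mul hAE.norm
  simpa using (squeeze_zero_norm' hbound hbound_lim).add hE_pow_lim

end BanachAlgebra

attribute [local instance] Matrix.linftyOpNormedRing Matrix.linftyOpNormedAlgebra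

theorem transition_matrix_powers_limit_general {ι : Type*} [Fintype ι] [DecidableEq ι]
    (Q : Matrix ι ι ℝ) (c : ℕ → ℝ) (P : ℕ → Matrix ι ι ℝ)
    (hc_pos : ∀ N, 0 < c N) (hc : Tendsto c atTop (nhds 0))
    (happrox : Tendsto (fun N => ‖P N - ((1 : Matrix ι ι ℝ) + c N • Q)‖ / c N) atTop (nhds 0)) :
    ∀ t : ℝ, 0 ≤ t →
      Tendsto (fun N : ℕ => P N ^ ⌊t / c N⌋₊) atTop (nhds (NormedSpace.exp (t • Q))) := by
  intro t ht
  cases isEmpty_or_nonempty ι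
  -- `‖(1 : Matrix ι ι ℝ)‖ = 1` only holds for nonempty `ι`
  · exact tendsto_const_nhds.congr fun N => Subsingleton.elim _ _
  have hc' : Tendsto c atTop (𝓝[>] 0) := tendsto_nhdsWithin_iff.2 ⟨hc, .of_forall hc_pos⟩
  refine tendsto_pow_exp_of_tendsto_inv_smul_sub_one hc'
    ((tendsto_nat_floor_div_mul_nhdsGT_zero ht).comp hc') ?_
  refine tendsto_iff_norm_sub_tendsto_zero.2 (happrox.congr fun N => ?_)
  have hcN := hc_pos N
  have hslope : (c N)⁻¹ • (P N - 1) - Q = (c N)⁻¹ • (P N - (1 + c N • Q)) := by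
    rw [smul_sub, smul_sub, smul_add, inv_smul_smul₀ hcN.ne', sub_sub]
  rw [hslope, norm_smul, norm_inv, Real.norm_of_nonneg hcN.le, inv_mul_eq_div]

/-- If `‖P_N‖ ≤ 1`, `‖I + c_N Q‖ ≤ 1` for large `N` (in the `L∞` operator norm
`‖A‖ = max_i Σ_j |A_{ij}|`), `c_N → 0` with `c_N > 0`, and
`‖P_N − (I + c_N Q)‖/c_N → 0`, then `P_N^{⌊t/c_N⌋} → exp(tQ)` for every `t ≥ 0`. -/
theorem transition_matrix_powers_limit {ι : Type*} [Fintype ι] [DecidableEq ι]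
    (Q : Matrix ι ι ℝ) (c : ℕ → ℝ) (P : ℕ → Matrix ι ι ℝ)
    (hc_pos : ∀ N, 0 < c N) (hc : Tendsto c atTop (nhds 0))
    (hP : ∀ N, ‖P N‖ ≤ 1)
    (hIQ : ∀ᶠ N in atTop, ‖(1 : Matrix ι ι ℝ) + c N • Q‖ ≤ 1)
    (happrox : Tendsto (fun N => ‖P N - ((1 : Matrix ι ι ℝ) + c N • Q)‖ / c N) atTop (nhds 0)) :
    ∀ t : ℝ, 0 ≤ t →
      Tendsto (fun N : ℕ => P N ^ ⌊t / c N⌋₊) atTop (nhds (NormedSpace.exp (t • Q))) :=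
  transition_matrix_powers_limit_general Q c P hc_pos hc happrox
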